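/- Let Ω be a smooth function of (w,z,w̃,z̃) satisfying the first heavenly equation Ω_{wz̃}Ω_{zw̃} − Ω_{ww̃}Ω_{zz̃} = 1. Then for every λ the vector fields L₀ = Ω_{ww̃}∂_{z̃} − Ω_{wz̃}∂_{w̃} − λ∂_w and L₁ = Ω_{zw̃}∂_{z̃} − Ω_{zz̃}∂_{w̃} − λ∂_z satisfy [L₀, L₁] = 0. -/

import Mathlib

/-- Partial derivative with respect to the first variable `w`. -/
noncomputable def pw (f : ℂ → ℂ → ℂ → ℂ → ℂ) : ℂ → ℂ → ℂ → ℂ → ℂ :=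
  fun w z tw tz => deriv (fun t => f t z tw tz) w

/-- Partial derivative with respect to the second variable `z`. -/
noncomputable def pz (f : ℂ → ℂ → ℂ → ℂ → ℂ) : ℂ → ℂ → ℂ → ℂ → ℂ :=
  fun w z tw tz => deriv (fun t => f w t tw tz) z

/-- Partial derivative with respect to the third variable `w̃`. -/
noncomputable def ptw (f : ℂ → ℂ → ℂ → ℂ → ℂ) : ℂ → ℂ → ℂ → ℂ → ℂ :=
  fun w z tw tz => deriv (fun t => f w z t tz) tw

/-- Partial derivative with respect to the fourth variable `z̃`. -/
noncomputable def ptz (f : ℂ → ℂ → ℂ → ℂ → ℂ) : ℂ → ℂ → ℂ → ℂ → ℂ :=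
  fun w z tw tz => deriv (fun t => f w z tw t) tz

/-- Smoothness of a function of four complex variables. -/
def Smooth4 (f : ℂ → ℂ → ℂ → ℂ → ℂ) : Prop :=
  ContDiff ℂ ⊤ (fun p : ℂ × ℂ × ℂ × ℂ => f p.1 p.2.1 p.2.2.1 p.2.2.2)

/-- L₀ = Ω_{ww̃}∂_{z̃} − Ω_{wz̃}∂_{w̃} − λ∂_w, acting on functions. -/
noncomputable def LaxL0 (Ω : ℂ → ℂ → ℂ → ℂ → ℂ) (lam : ℂ)
    (g : ℂ → ℂ → ℂ → ℂ → ℂ) : ℂ → ℂ → ℂ → ℂ → ℂ :=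
  fun w z tw tz =>
    ptw (pw Ω) w z tw tz * ptz g w z tw tz
      - ptz (pw Ω) w z tw tz * ptw g w z tw tz
      - lam * pw g w z tw tz

/-- L₁ = Ω_{zw̃}∂_{z̃} − Ω_{zz̃}∂_{w̃} − λ∂_z, acting on functions. -/
noncomputable def LaxL1 (Ω : ℂ → ℂ → ℂ → ℂ → ℂ) (lam : ℂ)
    (g : ℂ → ℂ → ℂ → ℂ → ℂ) : ℂ → ℂ → ℂ → ℂ → ℂ :=
  fun w z tw tz =>
    ptw (pz Ω) w z tw tz * ptz g w z tw tz
      - ptz (pz Ω) w z tw tz * ptw g w z tw tz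
      - lam * pz g w z tw tz

/-!
Write `X_g = g_w̃ ∂_z̃ - g_z̃ ∂_w̃` for the Hamiltonian field of `g` in the `(w̃, z̃)` plane. Then
`L₀` and `L₁` are differentiation along `V₀ = X_{Ω_w} - λ ∂_w` and `V₁ = X_{Ω_z} - λ ∂_z`, so
`[L₀, L₁]` is differentiation along the Lie bracket `[V₀, V₁]`. Each coefficient of that bracket
is a derivative of the Poisson bracket `{Ω_w, Ω_z}`, which the heavenly equation makes constant,
plus `λ` times a derivative of `Ω_{wz} - Ω_{zw}`, which vanishes by symmetry of mixed partials.
-/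

open VectorField

section HamiltonianField

variable {𝕜 E : Type*} [RCLike 𝕜] [NormedAddCommGroup E] [NormedSpace 𝕜 E]

theorem fderiv_fderiv_apply_comm {F : Type*} [NormedAddCommGroup F] [NormedSpace 𝕜 F]
    {g : E → F} (hg : ContDiff 𝕜 2 g) (x u v : E) :
    fderiv 𝕜 (fun y => fderiv 𝕜 g y u) x v = fderiv 𝕜 (fun y => fderiv 𝕜 g y v) x u := by
  have hd : DifferentiableAt 𝕜 (fderiv 𝕜 g) x :=
    (hg.fderiv_right (m := 1) le_rfl).differentiable one_ne_zero x
  rw [fderiv_clm_apply hd (differentiableAt_const u),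
    fderiv_clm_apply hd (differentiableAt_const v)]
  simpa using hg.contDiffAt.isSymmSndFDerivAt (by simp) v u

theorem differentiable_fderiv_apply {F : Type*} [NormedAddCommGroup F] [NormedSpace 𝕜 F]
    {g : E → F} (hg : ContDiff 𝕜 2 g) (u : E) :
    Differentiable 𝕜 (fun y => fderiv 𝕜 g y u) :=
  ((hg.fderiv_right (m := 1) le_rfl).clm_apply contDiff_const).differentiable one_ne_zero

theorem contDiff_fderiv_apply {F : Type*} [NormedAddCommGroup F] [NormedSpace 𝕜 F]
    {g : E → F} (hg : ContDiff 𝕜 ⊤ g) (u : E) : ContDiff 𝕜 ⊤ (fun y => fderiv 𝕜 g y u) :=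
  (hg.fderiv_right le_top).clm_apply contDiff_const

noncomputable def hamiltonianField (a b : E) (g : E → 𝕜) : E → E :=
  fun x => fderiv 𝕜 g x a • b - fderiv 𝕜 g x b • a

noncomputable def poissonBracket (a b : E) (g h : E → 𝕜) : E → 𝕜 :=
  fun x => fderiv 𝕜 g x a * fderiv 𝕜 h x b - fderiv 𝕜 g x b * fderiv 𝕜 h x a

variable {a b : E} {g h : E → 𝕜}

theorem fderiv_apply_hamiltonianField (k : E → 𝕜) (x : E) :
    fderiv 𝕜 k x (hamiltonianField a b g x) = poissonBracket a b g k x := by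
  simp only [hamiltonianField, poissonBracket, map_sub, map_smul, smul_eq_mul]

theorem differentiable_hamiltonianField (hg : ContDiff 𝕜 2 g) :
    Differentiable 𝕜 (hamiltonianField a b g) :=
  ((differentiable_fderiv_apply hg a).smul_const b).sub
    ((differentiable_fderiv_apply hg b).smul_const a)

theorem fderiv_hamiltonianField (hg : ContDiff 𝕜 2 g) (x w : E) :
    fderiv 𝕜 (hamiltonianField a b g) x w =
      fderiv 𝕜 (fun y => fderiv 𝕜 g y a) x w • b -
        fderiv 𝕜 (fun y => fderiv 𝕜 g y b) x w • a := by
  have ha := differentiable_fderiv_apply hg a x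
  have hb := differentiable_fderiv_apply hg b x
  unfold hamiltonianField
  rw [fderiv_fun_sub (ha.smul_const b) (hb.smul_const a), fderiv_smul_const ha,
    fderiv_smul_const hb]
  simp

theorem fderiv_poissonBracket (hg : ContDiff 𝕜 2 g) (hh : ContDiff 𝕜 2 h) (x w : E) :
    fderiv 𝕜 (poissonBracket a b g h) x w =
      poissonBracket a b (fun y => fderiv 𝕜 g y w) h x +
        poissonBracket a b g (fun y => fderiv 𝕜 h y w) x := by
  have hga := differentiable_fderiv_apply hg a x
  have hgb := differentiable_fderiv_apply hg b x
  have hha := differentiable_fderiv_apply hh a x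
  have hhb := differentiable_fderiv_apply hh b x
  unfold poissonBracket
  rw [fderiv_fun_sub (hga.fun_mul hhb) (hgb.fun_mul hha), fderiv_fun_mul hga hhb,
    fderiv_fun_mul hgb hha]
  simp only [sub_apply, add_apply, smul_apply, smul_eq_mul, fderiv_fderiv_apply_comm hg x w,
    fderiv_fderiv_apply_comm hh x w]
  ring

theorem lieBracket_hamiltonianField_sub_smul_eq_zero (hg : ContDiff 𝕜 2 g)
    (hh : ContDiff 𝕜 2 h) {c : 𝕜} (hgh : poissonBracket a b g h = fun _ => c) {u v : E}
    (huv : (fun x => fderiv 𝕜 h x u) = fun x => fderiv 𝕜 g x v) (lam : 𝕜) :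
    lieBracket 𝕜 (fun x => hamiltonianField a b g x - lam • u)
      (fun x => hamiltonianField a b h x - lam • v) = 0 := by
  funext x
  have hcoeff : ∀ e : E,
      fderiv 𝕜 (fun y => fderiv 𝕜 h y e) x (hamiltonianField a b g x - lam • u) =
        fderiv 𝕜 (fun y => fderiv 𝕜 g y e) x (hamiltonianField a b h x - lam • v) := by
    intro e
    have hpb : fderiv 𝕜 (poissonBracket a b g h) x e = 0 := by simp [hgh]
    have hcompat : fderiv 𝕜 (fun y => fderiv 𝕜 h y u) x e =
        fderiv 𝕜 (fun y => fderiv 𝕜 g y v) x e := by rw [huv]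
    rw [fderiv_poissonBracket hg hh] at hpb
    rw [fderiv_fderiv_apply_comm hh, fderiv_fderiv_apply_comm hg] at hcompat
    simp only [map_sub, map_smul, smul_eq_mul, fderiv_apply_hamiltonianField]
    simp only [poissonBracket] at hpb ⊢
    linear_combination hpb - lam * hcompat
  simp only [lieBracket, fderiv_sub_const, fderiv_hamiltonianField hg, fderiv_hamiltonianField hh]
  rw [hcoeff a, hcoeff b, sub_self, Pi.zero_apply]

end HamiltonianField

abbrev uncurry4 (f : ℂ → ℂ → ℂ → ℂ → ℂ) : ℂ × ℂ × ℂ × ℂ → ℂ :=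
  fun p => f p.1 p.2.1 p.2.2.1 p.2.2.2

section Coordinates

variable {f : ℂ → ℂ → ℂ → ℂ → ℂ}

theorem uncurry4_pw (hf : Differentiable ℂ (uncurry4 f)) :
    uncurry4 (pw f) = fun p => fderiv ℂ (uncurry4 f) p (1, 0, 0, 0) := by
  funext ⟨w, z, tw, tz⟩
  exact ((hf _).hasFDerivAt.comp_hasDerivAt w ((hasDerivAt_id w).prodMk
    ((hasDerivAt_const w z).prodMk ((hasDerivAt_const w tw).prodMk (hasDerivAt_const w tz))))).deriv

theorem uncurry4_pz (hf : Differentiable ℂ (uncurry4 f)) :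
    uncurry4 (pz f) = fun p => fderiv ℂ (uncurry4 f) p (0, 1, 0, 0) := by
  funext ⟨w, z, tw, tz⟩
  exact ((hf _).hasFDerivAt.comp_hasDerivAt z ((hasDerivAt_const z w).prodMk
    ((hasDerivAt_id z).prodMk ((hasDerivAt_const z tw).prodMk (hasDerivAt_const z tz))))).deriv

theorem uncurry4_ptw (hf : Differentiable ℂ (uncurry4 f)) :
    uncurry4 (ptw f) = fun p => fderiv ℂ (uncurry4 f) p (0, 0, 1, 0) := by
  funext ⟨w, z, tw, tz⟩
  exact ((hf _).hasFDerivAt.comp_hasDerivAt tw ((hasDerivAt_const tw w).prodMk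
    ((hasDerivAt_const tw z).prodMk ((hasDerivAt_id tw).prodMk (hasDerivAt_const tw tz))))).deriv

theorem uncurry4_ptz (hf : Differentiable ℂ (uncurry4 f)) :
    uncurry4 (ptz f) = fun p => fderiv ℂ (uncurry4 f) p (0, 0, 0, 1) := by
  funext ⟨w, z, tw, tz⟩
  exact ((hf _).hasFDerivAt.comp_hasDerivAt tz ((hasDerivAt_const tz w).prodMk
    ((hasDerivAt_const tz z).prodMk ((hasDerivAt_const tz tw).prodMk (hasDerivAt_id tz))))).deriv

theorem smooth4_pw (hf : Smooth4 f) : Smooth4 (pw f) := by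
  show ContDiff ℂ ⊤ (uncurry4 (pw f))
  rw [uncurry4_pw (hf.differentiable (by simp))]
  exact contDiff_fderiv_apply hf _

theorem smooth4_pz (hf : Smooth4 f) : Smooth4 (pz f) := by
  show ContDiff ℂ ⊤ (uncurry4 (pz f))
  rw [uncurry4_pz (hf.differentiable (by simp))]
  exact contDiff_fderiv_apply hf _

end Coordinates

noncomputable def laxField (Ω : ℂ → ℂ → ℂ → ℂ → ℂ) (lam : ℂ) (u : ℂ × ℂ × ℂ × ℂ) :
    ℂ × ℂ × ℂ × ℂ → ℂ × ℂ × ℂ × ℂ :=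
  fun p => hamiltonianField (0, 0, 1, 0) (0, 0, 0, 1)
    (fun q => fderiv ℂ (uncurry4 Ω) q u) p - lam • u

section LaxPair

variable {Ω g : ℂ → ℂ → ℂ → ℂ → ℂ}

theorem differentiable_laxField (hΩ : Smooth4 Ω) (lam : ℂ) (u : ℂ × ℂ × ℂ × ℂ) :
    Differentiable ℂ (laxField Ω lam u) :=
  (differentiable_hamiltonianField ((contDiff_fderiv_apply hΩ u).of_le le_top)).sub_const _

theorem uncurry4_laxL0 (hΩ : Smooth4 Ω) (hg : Differentiable ℂ (uncurry4 g)) (lam : ℂ) :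
    uncurry4 (LaxL0 Ω lam g) =
      fun p => fderiv ℂ (uncurry4 g) p (laxField Ω lam (1, 0, 0, 0) p) := by
  have hΩw : Differentiable ℂ (uncurry4 (pw Ω)) := (smooth4_pw hΩ).differentiable (by simp)
  show (fun p => uncurry4 (ptw (pw Ω)) p * uncurry4 (ptz g) p
    - uncurry4 (ptz (pw Ω)) p * uncurry4 (ptw g) p - lam * uncurry4 (pw g) p) = _
  rw [uncurry4_ptw hΩw, uncurry4_ptz hΩw, uncurry4_ptw hg, uncurry4_ptz hg, uncurry4_pw hg,
    uncurry4_pw (hΩ.differentiable (by simp))]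
  simp only [laxField, hamiltonianField, map_sub, map_smul, smul_eq_mul]

theorem uncurry4_laxL1 (hΩ : Smooth4 Ω) (hg : Differentiable ℂ (uncurry4 g)) (lam : ℂ) :
    uncurry4 (LaxL1 Ω lam g) =
      fun p => fderiv ℂ (uncurry4 g) p (laxField Ω lam (0, 1, 0, 0) p) := by
  have hΩz : Differentiable ℂ (uncurry4 (pz Ω)) := (smooth4_pz hΩ).differentiable (by simp)
  show (fun p => uncurry4 (ptw (pz Ω)) p * uncurry4 (ptz g) p
    - uncurry4 (ptz (pz Ω)) p * uncurry4 (ptw g) p - lam * uncurry4 (pz g) p) = _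
  rw [uncurry4_ptw hΩz, uncurry4_ptz hΩz, uncurry4_ptw hg, uncurry4_ptz hg, uncurry4_pz hg,
    uncurry4_pz (hΩ.differentiable (by simp))]
  simp only [laxField, hamiltonianField, map_sub, map_smul, smul_eq_mul]

theorem laxL0_laxL1_sub_laxL1_laxL0 (hΩ : Smooth4 Ω) (hg : Smooth4 g) (lam w z tw tz : ℂ) :
    LaxL0 Ω lam (LaxL1 Ω lam g) w z tw tz - LaxL1 Ω lam (LaxL0 Ω lam g) w z tw tz =
      fderiv ℂ (uncurry4 g) (w, z, tw, tz)
        (lieBracket ℂ (laxField Ω lam (1, 0, 0, 0)) (laxField Ω lam (0, 1, 0, 0))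
          (w, z, tw, tz)) := by
  have hG : ContDiff ℂ ⊤ (uncurry4 g) := hg
  have hG' : Differentiable ℂ (fderiv ℂ (uncurry4 g)) :=
    (hG.fderiv_right (m := 1) le_top).differentiable one_ne_zero
  have hV0 := differentiable_laxField hΩ lam (1, 0, 0, 0)
  have hV1 := differentiable_laxField hΩ lam (0, 1, 0, 0)
  have hL0 := uncurry4_laxL0 hΩ (hG.differentiable (by simp)) lam
  have hL1 := uncurry4_laxL1 hΩ (hG.differentiable (by simp)) lam
  have hL0g : Differentiable ℂ (uncurry4 (LaxL0 Ω lam g)) := hL0 ▸ hG'.clm_apply hV0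
  have hL1g : Differentiable ℂ (uncurry4 (LaxL1 Ω lam g)) := hL1 ▸ hG'.clm_apply hV1
  show uncurry4 (LaxL0 Ω lam (LaxL1 Ω lam g)) (w, z, tw, tz)
    - uncurry4 (LaxL1 Ω lam (LaxL0 Ω lam g)) (w, z, tw, tz) = _
  rw [uncurry4_laxL0 hΩ hL1g, uncurry4_laxL1 hΩ hL0g, hL0, hL1,
    fderiv_apply_lieBracket hG.contDiffAt (by simp) (hV1 _) (hV0 _)]

theorem lieBracket_laxField_eq_zero (hΩ : Smooth4 Ω)
    (heav : ∀ w z tw tz : ℂ,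
      ptz (pw Ω) w z tw tz * ptw (pz Ω) w z tw tz
        - ptw (pw Ω) w z tw tz * ptz (pz Ω) w z tw tz = 1) (lam : ℂ) :
    lieBracket ℂ (laxField Ω lam (1, 0, 0, 0)) (laxField Ω lam (0, 1, 0, 0)) = 0 := by
  have hF : ContDiff ℂ 2 (uncurry4 Ω) := hΩ.of_le le_top
  have hΩd : Differentiable ℂ (uncurry4 Ω) := hΩ.differentiable (by simp)
  have hΩw : Differentiable ℂ (uncurry4 (pw Ω)) := (smooth4_pw hΩ).differentiable (by simp)
  have hΩz : Differentiable ℂ (uncurry4 (pz Ω)) := (smooth4_pz hΩ).differentiable (by simp)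
  refine lieBracket_hamiltonianField_sub_smul_eq_zero
    ((contDiff_fderiv_apply hΩ _).of_le le_top) ((contDiff_fderiv_apply hΩ _).of_le le_top)
    (c := -1) ?_ (funext fun x => fderiv_fderiv_apply_comm hF x _ _) lam
  funext p
  have hp := heav p.1 p.2.1 p.2.2.1 p.2.2.2
  change uncurry4 (ptz (pw Ω)) p * uncurry4 (ptw (pz Ω)) p
    - uncurry4 (ptw (pw Ω)) p * uncurry4 (ptz (pz Ω)) p = 1 at hp
  rw [uncurry4_ptz hΩw, uncurry4_ptw hΩw, uncurry4_ptz hΩz, uncurry4_ptw hΩz, uncurry4_pw hΩd,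
    uncurry4_pz hΩd] at hp
  simp only [poissonBracket]
  linear_combination -hp

end LaxPair

/-- If Ω solves the first heavenly equation Ω_{wz̃}Ω_{zw̃} − Ω_{ww̃}Ω_{zz̃} = 1
then the Lax pair commutes: [L₀, L₁] = 0 on smooth functions, for every λ. -/
theorem lax_pair_commutes_first_heavenly
    (Ω : ℂ → ℂ → ℂ → ℂ → ℂ) (hΩ : Smooth4 Ω)
    (heav : ∀ w z tw tz : ℂ,
      ptz (pw Ω) w z tw tz * ptw (pz Ω) w z tw tz
        - ptw (pw Ω) w z tw tz * ptz (pz Ω) w z tw tz = 1) :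
    ∀ (lam : ℂ) (f : ℂ → ℂ → ℂ → ℂ → ℂ), Smooth4 f →
      ∀ w z tw tz : ℂ,
        LaxL0 Ω lam (LaxL1 Ω lam f) w z tw tz
          = LaxL1 Ω lam (LaxL0 Ω lam f) w z tw tz := by
  intro lam f hf w z tw tz
  rw [← sub_eq_zero, laxL0_laxL1_sub_laxL1_laxL0 hΩ hf, lieBracket_laxField_eq_zero hΩ heav,
    Pi.zero_apply, map_zero]
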